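/- arXiv:math/9909085 — 5 statements merged into one kernel-verified Lean document; each statement's English description precedes it below -/
import Mathlib

section
/- Let r/α = [a_1,…,a_k] be a Hirzebruch–Jung continued fraction (all a_i ≥ 2, r > α ≥ 1 coprime), and let r/β = [b_1,…,b_l] be the Hirzebruch–Jung continued fraction with β ≡ (r-α)⁻¹ (mod r), 1 ≤ β < r. Then the matrix product [[0,1],[-1,a_1]]·[[0,1],[-1,a_2]]⋯[[0,1],[-1,a_k]]·[[0,1],[-1,1]]·[[0,1],[-1,b_1]]⋯[[0,1],[-1,b_l]]·[[0,1],[-1,1]] = -I. -/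
/-- `M a` is the 2×2 integer matrix `[[0,1],[-1,a]]`. -/
def M (x : ℤ) : Matrix (Fin 2) (Fin 2) ℤ := !![0, 1; -1, x]

/-- Auxiliary two-term recurrence sequence. -/
def seqHJ (a : ℕ → ℤ) (x y : ℤ) : ℕ → ℤ
  | 0 => x
  | 1 => y
  | (n+2) => a (n+1) * seqHJ a x y (n+1) - seqHJ a x y n

lemma seqHJ_zero (a : ℕ → ℤ) (x y : ℤ) : seqHJ a x y 0 = x := rfl
lemma seqHJ_one (a : ℕ → ℤ) (x y : ℤ) : seqHJ a x y 1 = y := rfl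
lemma seqHJ_two (a : ℕ → ℤ) (x y : ℤ) (n : ℕ) :
    seqHJ a x y (n+2) = a (n+1) * seqHJ a x y (n+1) - seqHJ a x y n := rfl

/-- The product of the first `n+1` matrices in terms of convergents. -/
lemma prodHJ (a : ℕ → ℤ) (n : ℕ) :
    ((List.range (n+1)).map (fun i => M (a i))).prod
      = !![-(seqHJ a 0 1 n), seqHJ a 0 1 (n+1);
           -(seqHJ a 1 (a 0) n), seqHJ a 1 (a 0) (n+1)] := by
  induction n with
  | zero =>
      have h1 : seqHJ a 0 1 (0+1) = 1 := rfl
      have h2 : seqHJ a 1 (a 0) (0+1) = a 0 := rfl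
      simp [List.range_succ, M, h1, h2, seqHJ_zero]
  | succ n ih =>
      rw [List.range_succ, List.map_append, List.prod_append, ih]
      simp only [List.map_cons, List.map_nil, List.prod_cons, List.prod_nil, mul_one, M,
        Matrix.mul_fin_two, seqHJ_two]
      congr 1 <;> ring

/-- Determinant-type relation for the convergents. -/
lemma detHJ (a : ℕ → ℤ) (n : ℕ) :
    seqHJ a 0 1 (n+1) * seqHJ a 1 (a 0) n - seqHJ a 0 1 n * seqHJ a 1 (a 0) (n+1) = 1 := by
  induction n with
  | zero => simp [seqHJ_zero, seqHJ_one]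
  | succ n ih =>
      rw [seqHJ_two, seqHJ_two]
      linear_combination ih

/-- Monotonicity of the denominators when all partial quotients are `≥ 2`. -/
lemma monoHJ (a : ℕ → ℤ) (k : ℕ) (ha : ∀ i, i < k → 2 ≤ a i) :
    ∀ n, n < k → 1 ≤ seqHJ a 1 (a 0) n ∧ seqHJ a 1 (a 0) n < seqHJ a 1 (a 0) (n+1) := by
  intro n
  induction n with
  | zero =>
      intro h
      refine ⟨le_refl _, ?_⟩
      have := ha 0 h
      have h1 : seqHJ a 1 (a 0) 0 = 1 := rfl
      have h2 : seqHJ a 1 (a 0) (0+1) = a 0 := rfl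
      rw [h1, h2]; omega
  | succ n ih =>
      intro h
      obtain ⟨h1, h2⟩ := ih (by omega)
      have h3 := ha (n+1) h
      refine ⟨by omega, ?_⟩
      rw [seqHJ_two]
      nlinarith

/-- The remainder sequence is a combination of the convergents. -/
lemma combHJ (a c : ℕ → ℤ) (k : ℕ)
    (hcrec : ∀ i, i < k → c (i + 2) = a i * c (i + 1) - c i) :
    ∀ n, n ≤ k →
      c 1 * seqHJ a 1 (a 0) n - c 0 * seqHJ a 0 1 n = c (n+1) := by
  have key : ∀ n, n + 1 ≤ k →
      (c 1 * seqHJ a 1 (a 0) n - c 0 * seqHJ a 0 1 n = c (n+1)) ∧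
      (c 1 * seqHJ a 1 (a 0) (n+1) - c 0 * seqHJ a 0 1 (n+1) = c (n+2)) := by
    intro n
    induction n with
    | zero =>
        intro h
        have h0 := hcrec 0 (by omega)
        have h1 : seqHJ a 1 (a 0) 0 = 1 := rfl
        have h2 : seqHJ a 0 1 0 = 0 := rfl
        have h3 : seqHJ a 1 (a 0) (0+1) = a 0 := rfl
        have h4 : seqHJ a 0 1 (0+1) = 1 := rfl
        constructor
        · rw [h1, h2]; ring
        · rw [h3, h4, h0]; ring
    | succ n ih =>
        intro h
        obtain ⟨e1, e2⟩ := ih (by omega)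
        refine ⟨e2, ?_⟩
        have hrec := hcrec (n+1) (by omega)
        rw [seqHJ_two, seqHJ_two, hrec]
        linear_combination a (n+1) * e2 - e1
  intro n hn
  match n, hn with
  | 0, _ =>
      have h1 : seqHJ a 1 (a 0) 0 = 1 := rfl
      have h2 : seqHJ a 0 1 0 = 0 := rfl
      rw [h1, h2]; ring
  | (n+1), hn => exact (key n hn).2

/-- Main structural lemma: the product of the HJ matrices of `r/α`. -/
lemma keyHJ (r α β k : ℕ) (m : ℤ) (hr : 2 ≤ r) (hα : 1 ≤ α) (hαr : α < r)
    (hβ : 1 ≤ β) (hβr : β < r) (hm : (r : ℤ) * m = (α : ℤ) * (β : ℤ) + 1)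
    (a c : ℕ → ℤ) (ha : ∀ i, i < k → 2 ≤ a i)
    (hc0 : c 0 = (r : ℤ)) (hc1 : c 1 = (α : ℤ))
    (hcrec : ∀ i, i < k → c (i + 2) = a i * c (i + 1) - c i)
    (hck : c k = 1) (hck1 : c (k + 1) = 0) :
    ((List.range k).map (fun i => M (a i))).prod
      = !![m - (α : ℤ), (α : ℤ); (β : ℤ) - (r : ℤ), (r : ℤ)] := by
  -- k ≥ 1
  have hk : 1 ≤ k := by
    by_contra h
    have hk0 : k = 0 := by omega
    rw [hk0, hc0] at hck
    have : (2 : ℤ) ≤ (r : ℤ) := by exact_mod_cast hr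
    omega
  obtain ⟨k', rfl⟩ : ∃ k', k = k' + 1 := ⟨k - 1, by omega⟩
  set p := seqHJ a 0 1 with hp
  set q := seqHJ a 1 (a 0) with hq
  have e1 : (α : ℤ) * q k' - (r : ℤ) * p k' = 1 := by
    have := combHJ a c (k'+1) hcrec k' (by omega)
    rw [hc0, hc1] at this
    have hck' : c (k'+1) = 1 := hck
    rw [hck'] at this; linarith
  have e2 : (α : ℤ) * q (k'+1) - (r : ℤ) * p (k'+1) = 0 := by
    have := combHJ a c (k'+1) hcrec (k'+1) (le_refl _)
    rw [hc0, hc1, hck1] at this; linarith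
  have e3 : p (k'+1) * q k' - p k' * q (k'+1) = 1 := detHJ a k'
  -- q (k'+1) = r
  have hqk : q (k'+1) = (r : ℤ) := by
    linear_combination q k' * e2 + (r : ℤ) * e3 - q (k'+1) * e1
  -- p (k'+1) = α
  have hr0 : (r : ℤ) ≠ 0 := by positivity
  have hpk : p (k'+1) = (α : ℤ) := by
    rw [hqk] at e2
    have h : (r : ℤ) * p (k'+1) = (r : ℤ) * (α : ℤ) := by linear_combination -e2
    exact mul_left_cancel₀ hr0 h
  -- bounds on q k'
  have hmono := monoHJ a (k'+1) ha k' (by omega)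
  have hq1 : 1 ≤ q k' := hmono.1
  have hq2 : q k' < (r : ℤ) := by rw [← hqk]; exact hmono.2
  -- coprimality
  have hcop : IsCoprime (r : ℤ) (α : ℤ) := ⟨-p k', q k', by linarith [e1]⟩
  -- q k' = r - β
  have hdvd : (r : ℤ) ∣ (α : ℤ) * (q k' - ((r : ℤ) - (β : ℤ))) := by
    refine ⟨p k' - (α : ℤ) + m, ?_⟩
    linear_combination e1 - hm
  have hdvd2 : (r : ℤ) ∣ (q k' - ((r : ℤ) - (β : ℤ))) := hcop.dvd_of_dvd_mul_left hdvd
  have hβr' : (β : ℤ) < (r : ℤ) := by exact_mod_cast hβr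
  have hβ1 : (1 : ℤ) ≤ (β : ℤ) := by exact_mod_cast hβ
  have hqβ : q k' = (r : ℤ) - (β : ℤ) := by
    have := Int.eq_zero_of_abs_lt_dvd hdvd2 (by
      rw [abs_lt]; constructor <;> linarith)
    linarith
  -- p k' = α - m
  have hpβ : p k' = (α : ℤ) - m := by
    have : (r : ℤ) * p k' = (r : ℤ) * ((α : ℤ) - m) := by
      linear_combination (α:ℤ) * hqβ - e1 + hm
    exact mul_left_cancel₀ hr0 this
  rw [prodHJ a k', ← hp, ← hq, hqk, hpk, hqβ, hpβ]
  congr 1 <;> ring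

/-- Let `r/α = [a₁,…,a_k]` be a Hirzebruch–Jung continued fraction (all
`a_i ≥ 2`, `r > α ≥ 1`, encoded by the remainder sequence), and let
`r/β = [b₁,…,b_l]` be the Hirzebruch–Jung continued fraction of `r/β` where
`1 ≤ β < r` and `αβ ≡ -1 (mod r)`.  Then
`M(a₁)⋯M(a_k)·M(1)·M(b₁)⋯M(b_l)·M(1) = -I`. -/
theorem stmt_11 (r α β k l : ℕ) (hr : 2 ≤ r) (hα : 1 ≤ α) (hαr : α < r)
    (hβ : 1 ≤ β) (hβr : β < r)
    (hmod : (α : ℤ) * (β : ℤ) ≡ -1 [ZMOD (r : ℤ)])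
    (a b : ℕ → ℤ)
    (ha : ∀ i, i < k → 2 ≤ a i) (hb : ∀ i, i < l → 2 ≤ b i)
    (c : ℕ → ℤ) (hc0 : c 0 = (r : ℤ)) (hc1 : c 1 = (α : ℤ))
    (hcrec : ∀ i, i < k → c (i + 2) = a i * c (i + 1) - c i)
    (hck : c k = 1) (hck1 : c (k + 1) = 0)
    (d : ℕ → ℤ) (hd0 : d 0 = (r : ℤ)) (hd1 : d 1 = (β : ℤ))
    (hdrec : ∀ i, i < l → d (i + 2) = b i * d (i + 1) - d i)
    (hdl : d l = 1) (hdl1 : d (l + 1) = 0) :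
    ((List.range k).map (fun i => M (a i))).prod * M 1 *
      ((List.range l).map (fun i => M (b i))).prod * M 1 = -1 := by
  -- extract m with r * m = α * β + 1
  obtain ⟨m, hm⟩ : ∃ m : ℤ, (r : ℤ) * m = (α : ℤ) * (β : ℤ) + 1 := by
    have hd : (r : ℤ) ∣ (-1 - (α : ℤ) * (β : ℤ)) := hmod.dvd
    obtain ⟨t, ht⟩ := hd
    exact ⟨-t, by linarith⟩
  have hm' : (r : ℤ) * m = (β : ℤ) * (α : ℤ) + 1 := by rw [hm]; ring
  rw [keyHJ r α β k m hr hα hαr hβ hβr hm a c ha hc0 hc1 hcrec hck hck1,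
      keyHJ r β α l m hr hβ hβr hα hαr hm' b d hb hd0 hd1 hdrec hdl hdl1]
  show _ * !![(0:ℤ),1;-1,1] * _ * !![(0:ℤ),1;-1,1] = _
  rw [Matrix.mul_fin_two, Matrix.mul_fin_two, Matrix.mul_fin_two]
  have neg1 : (-1 : Matrix (Fin 2) (Fin 2) ℤ) = !![-1, 0; 0, -1] := by
    ext i j; fin_cases i <;> fin_cases j <;> simp
  rw [neg1]
  ext i j
  fin_cases i <;> fin_cases j <;> simp <;>
    first
    | ring1
    | linear_combination -hm
    | linear_combination hm
end

section
/- Define a 'contraction' on a list of integers all ≥ 1: replace a sublist [a, 1, b] by [a-1, b-1] (cyclically). Starting from any cyclic list of positive integers whose associated matrix product M(L) = ∏ [[0,1],[-1,a_i]] equals -I, and which contains at least one entry equal to 1 and has length ≥ 4, each contraction preserves the property M(L) = -I. -/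
lemma Mkey (a b : ℤ) : M (a - 1) * M (b - 1) = M a * M 1 * M b := by
  simp only [M]
  ext i j
  fin_cases i <;> fin_cases j <;>
    simp [Matrix.mul_apply, Fin.sum_univ_two] <;> ring

/-- A contraction replaces a (cyclically) consecutive sublist `[a, 1, b]` by
`[a-1, b-1]`.  If a cyclic list of positive integers of length ≥ 4 has
associated matrix product `-I`, then so does its contraction. -/
theorem stmt_12 (p q : List ℤ) (a b : ℤ)
    (hpos : ∀ x ∈ p ++ [a, 1, b] ++ q, 1 ≤ x)
    (hlen : 4 ≤ (p ++ [a, 1, b] ++ q).length)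
    (h : ((p ++ [a, 1, b] ++ q).map M).prod = -1) :
    ((p ++ [a - 1, b - 1] ++ q).map M).prod = -1 := by
  simp only [List.map_append, List.prod_append, List.map_cons, List.map_nil,
    List.prod_cons, List.prod_nil, mul_one] at h ⊢
  rw [Mkey, ← mul_assoc, ← mul_assoc] at *
  exact h
end

section
/- If a cyclic list of integers [a_1,…,a_n] with n ≥ 4 satisfies: the associated matrix product ∏ [[0,1],[-1,a_i]] = -I and all a_i ≥ 1, then not all a_i ≥ 2; that is, at least one entry equals 1. -/
lemma aux : ∀ (L : List ℤ) (a : ℤ), (∀ x ∈ a :: L, 2 ≤ x) →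
    1 ≤ (((a :: L).map M).prod) 1 1 ∧
      (((a :: L).map M).prod) 0 1 + 1 ≤ (((a :: L).map M).prod) 1 1 := by
  intro L
  induction L with
  | nil =>
    intro a ha
    have h2 : 2 ≤ a := ha a (by simp)
    simp [M, Matrix.mul_apply, Fin.sum_univ_two]
    omega
  | cons b L ih =>
    intro a ha
    have h2 : 2 ≤ a := ha a (by simp)
    have hrec := ih b (fun x hx => ha x (by simp at hx ⊢; tauto))
    set Q := (((b :: L).map M).prod) with hQ
    have hprod : (((a :: b :: L).map M).prod) = M a * Q := by
      simp [hQ]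
    have e1 : (((a :: b :: L).map M).prod) 1 1 = -Q 0 1 + a * Q 1 1 := by
      rw [hprod]
      simp [M, Matrix.mul_apply, Fin.sum_univ_two]
    have e0 : (((a :: b :: L).map M).prod) 0 1 = Q 1 1 := by
      rw [hprod]
      simp [M, Matrix.mul_apply, Fin.sum_univ_two]
    rw [e1, e0]
    obtain ⟨h11, h01⟩ := hrec
    constructor
    · nlinarith
    · nlinarith

/-- If a cyclic list `[a₁,…,a_n]` of integers with `n ≥ 4` has all `a_i ≥ 1`
and associated matrix product `∏ [[0,1],[-1,a_i]] = -I`, then not all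
`a_i ≥ 2`: at least one entry equals 1. -/
theorem stmt_13 (L : List ℤ) (hlen : 4 ≤ L.length) (hpos : ∀ x ∈ L, 1 ≤ x)
    (h : (L.map M).prod = -1) :
    ∃ x ∈ L, x = 1 := by
  by_contra hc
  push_neg at hc
  have h2 : ∀ x ∈ L, 2 ≤ x := fun x hx => by
    have := hpos x hx; have := hc x hx; omega
  match L, hlen with
  | a :: L', _ =>
    have := aux L' a h2
    rw [h] at this
    have hneg : ((-1 : Matrix (Fin 2) (Fin 2) ℤ)) 1 1 = -1 := by
      simp [Matrix.one_apply]
    omega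
end

section
/- Let Z ⊂ C³ be an A-cluster for a finite diagonal abelian subgroup A ⊂ SL(3,C), with ideal I_Z generated as in Nakamura's normal form by the seven equations x^{l+1} = ξ y^b z^f, y^{m+1} = η z^c x^d, z^{n+1} = ζ x^a y^e, y^{b+1}z^{f+1} = λ x^l, z^{c+1}x^{d+1} = μ y^m, x^{a+1}y^{e+1} = ν z^n, xyz = π. Then the constants satisfy λξ = μη = νζ = π. -/
private lemma smul_cancel {R : Type*} [CommRing R] [Algebra ℂ R]
    {c d : ℂ} {v : R} (hv : v ≠ 0) (h : c • v = d • v) : c = d := by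
  by_contra hne
  have hcd : c - d ≠ 0 := sub_ne_zero.mpr hne
  have h0 : (c - d) • v = 0 := by rw [sub_smul, h, sub_self]
  have : v = 0 := by
    have := congrArg (fun w => (c - d)⁻¹ • w) h0
    simpa [smul_smul, inv_mul_cancel₀ hcd] using this
  exact hv this

/-- Nakamura's normal form for an `A`-cluster: if the coordinate ring `R = O_Z`
(a commutative ℂ-algebra with images `x, y, z` of the coordinates) satisfies
the seven relations `x^{l+1} = ξ y^b z^f`, `y^{m+1} = η z^c x^d`,
`z^{n+1} = ζ x^a y^e`, `y^{b+1}z^{f+1} = λ x^l`, `z^{c+1}x^{d+1} = μ y^m`,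
`x^{a+1}y^{e+1} = ν z^n`, `xyz = π`, and the basic monomials `y^b z^f`,
`z^c x^d`, `x^a y^e` are nonzero, then `λξ = μη = νζ = π`. -/
theorem stmt_16 (R : Type*) [CommRing R] [Algebra ℂ R]
    (x y z : R) (a b c d e f l m n : ℕ)
    (ξ η ζ lam mu nu pi : ℂ)
    (h1 : x ^ (l + 1) = ξ • (y ^ b * z ^ f))
    (h2 : y ^ (m + 1) = η • (z ^ c * x ^ d))
    (h3 : z ^ (n + 1) = ζ • (x ^ a * y ^ e))
    (h4 : y ^ (b + 1) * z ^ (f + 1) = lam • x ^ l)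
    (h5 : z ^ (c + 1) * x ^ (d + 1) = mu • y ^ m)
    (h6 : x ^ (a + 1) * y ^ (e + 1) = nu • z ^ n)
    (h7 : x * y * z = pi • (1 : R))
    (hyz : y ^ b * z ^ f ≠ 0) (hzx : z ^ c * x ^ d ≠ 0) (hxy : x ^ a * y ^ e ≠ 0) :
    lam * ξ = pi ∧ mu * η = pi ∧ nu * ζ = pi := by
  refine ⟨?_, ?_, ?_⟩
  · apply smul_cancel hyz
    have key : x * (y ^ (b + 1) * z ^ (f + 1)) = x * (lam • x ^ l) := by rw [h4]
    calc (lam * ξ) • (y ^ b * z ^ f)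
        = lam • (ξ • (y ^ b * z ^ f)) := (mul_smul _ _ _)
      _ = lam • x ^ (l + 1) := by rw [h1]
      _ = x * (lam • x ^ l) := by rw [mul_smul_comm, pow_succ, mul_comm]
      _ = x * (y ^ (b + 1) * z ^ (f + 1)) := key.symm
      _ = (x * y * z) * (y ^ b * z ^ f) := by ring
      _ = pi • (y ^ b * z ^ f) := by rw [h7, smul_mul_assoc, one_mul]
  · apply smul_cancel hzx
    have key : y * (z ^ (c + 1) * x ^ (d + 1)) = y * (mu • y ^ m) := by rw [h5]
    calc (mu * η) • (z ^ c * x ^ d)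
        = mu • (η • (z ^ c * x ^ d)) := (mul_smul _ _ _)
      _ = mu • y ^ (m + 1) := by rw [h2]
      _ = y * (mu • y ^ m) := by rw [mul_smul_comm, pow_succ, mul_comm]
      _ = y * (z ^ (c + 1) * x ^ (d + 1)) := key.symm
      _ = (x * y * z) * (z ^ c * x ^ d) := by ring
      _ = pi • (z ^ c * x ^ d) := by rw [h7, smul_mul_assoc, one_mul]
  · apply smul_cancel hxy
    have key : z * (x ^ (a + 1) * y ^ (e + 1)) = z * (nu • z ^ n) := by rw [h6]
    calc (nu * ζ) • (x ^ a * y ^ e)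
        = nu • (ζ • (x ^ a * y ^ e)) := (mul_smul _ _ _)
      _ = nu • z ^ (n + 1) := by rw [h3]
      _ = z * (nu • z ^ n) := by rw [mul_smul_comm, pow_succ, mul_comm]
      _ = z * (x ^ (a + 1) * y ^ (e + 1)) := key.symm
      _ = (x * y * z) * (x ^ a * y ^ e) := by ring
      _ = pi • (x ^ a * y ^ e) := by rw [h7, smul_mul_assoc, one_mul]
end

section
/- In the 'up' case of Nakamura's equations for an A-cluster, set λ = ηζ, μ = ζξ, ν = ξη, π = ξηζ and l = a + d, m = b + e, n = c + f, and consider the seven equations x^{l+1} = ξ y^b z^f, y^{m+1} = η z^c x^d, z^{n+1} = ζ x^a y^e, y^{b+1}z^{f+1} = λ x^l, z^{c+1}x^{d+1} = μ y^m, x^{a+1}y^{e+1} = ν z^n, xyz = π; then, whenever ξηζ ≠ 0, in C[x,y,z] the element y^{b+1}z^{f+1} − ηζ x^{a+d} lies in the ideal generated by (y^{b+e+1} − η z^c x^d, z^{c+f+1} − ζ x^a y^e, x^{a+d+1} − ξ y^b z^f, xyz − ξηζ). -/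
open MvPolynomial

/-- In the "up" case of Nakamura's equations with `l = a+d`, `m = b+e`,
`n = c+f`, `λ = ηζ`, `μ = ζξ`, `ν = ξη`, `π = ξηζ`, the equations are
compatible whenever `ξηζ ≠ 0`: in `ℂ[x,y,z]`, the element
`y^{b+1}z^{f+1} − ηζ x^{a+d}` lies in the ideal generated by
`y^{b+e+1} − η z^c x^d`, `z^{c+f+1} − ζ x^a y^e`, `xyz − ξηζ` and
`x^{a+d+1} − ξ y^b z^f`. -/
theorem stmt_17 (a b c d e f : ℕ) (ξ η ζ : ℂ) (hne : ξ * η * ζ ≠ 0) :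
    (X 1 ^ (b + 1) * X 2 ^ (f + 1) - C (η * ζ) * X 0 ^ (a + d) :
        MvPolynomial (Fin 3) ℂ) ∈
      Ideal.span ({X 1 ^ (b + e + 1) - C η * (X 2 ^ c * X 0 ^ d),
                   X 2 ^ (c + f + 1) - C ζ * (X 0 ^ a * X 1 ^ e),
                   X 0 * X 1 * X 2 - C (ξ * η * ζ),
                   X 0 ^ (a + d + 1) - C ξ * (X 1 ^ b * X 2 ^ f)} :
        Set (MvPolynomial (Fin 3) ℂ)) := by
  have hξ : ξ ≠ 0 := fun h => hne (by simp [h])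
  have hu : IsUnit (C ξ : MvPolynomial (Fin 3) ℂ) :=
    (isUnit_map_iff C ξ).mpr hξ.isUnit
  rw [← Ideal.unit_mul_mem_iff_mem _ hu]
  have h3 : (X 0 * X 1 * X 2 - C (ξ * η * ζ) : MvPolynomial (Fin 3) ℂ) ∈
      Ideal.span ({X 1 ^ (b + e + 1) - C η * (X 2 ^ c * X 0 ^ d),
                   X 2 ^ (c + f + 1) - C ζ * (X 0 ^ a * X 1 ^ e),
                   X 0 * X 1 * X 2 - C (ξ * η * ζ),
                   X 0 ^ (a + d + 1) - C ξ * (X 1 ^ b * X 2 ^ f)} :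
        Set (MvPolynomial (Fin 3) ℂ)) := Ideal.subset_span (by simp)
  have h4 : (X 0 ^ (a + d + 1) - C ξ * (X 1 ^ b * X 2 ^ f) : MvPolynomial (Fin 3) ℂ) ∈
      Ideal.span ({X 1 ^ (b + e + 1) - C η * (X 2 ^ c * X 0 ^ d),
                   X 2 ^ (c + f + 1) - C ζ * (X 0 ^ a * X 1 ^ e),
                   X 0 * X 1 * X 2 - C (ξ * η * ζ),
                   X 0 ^ (a + d + 1) - C ξ * (X 1 ^ b * X 2 ^ f)} :
        Set (MvPolynomial (Fin 3) ℂ)) := Ideal.subset_span (by simp)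
  have key : (C ξ : MvPolynomial (Fin 3) ℂ) *
      (X 1 ^ (b + 1) * X 2 ^ (f + 1) - C (η * ζ) * X 0 ^ (a + d)) =
      X 0 ^ (a + d) * (X 0 * X 1 * X 2 - C (ξ * η * ζ)) -
      (X 1 * X 2) * (X 0 ^ (a + d + 1) - C ξ * (X 1 ^ b * X 2 ^ f)) := by
    simp only [map_mul]
    ring
  rw [key]
  exact Ideal.sub_mem _ (Ideal.mul_mem_left _ _ h3) (Ideal.mul_mem_left _ _ h4)
end
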